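/- Let P be an ordered set of strings, let u, v ∈ Decomp_BWT(P) and let x ∈ u be such that BWT(P)[x] ≠ $ and LF(P)[x] ∈ v. Then Dec_Pre[v] = Dec_Pre[u] extended by the single symbol BWT(P)[x], i.e. Dec_Pre[v] is the concatenation of Dec_Pre[u] with the one-symbol string BWT(P)[x]. -/

import Mathlib

namespace BwtXbw

variable {α β : Type*}

/-- An ordered set of strings: a nonempty list of distinct nonempty strings over `α`
(the list order is the enumeration `t_1, …, t_n`). -/
structure OSS (α : Type*) where
  strs : List (List α)
  strs_ne : strs ≠ []
  nodup : strs.Nodup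
  mem_ne : ∀ s ∈ strs, s ≠ []

/-- Embed a symbol of `α` into `WithBot α`; `⊥` plays the role of the separator `$`,
which is smaller than every symbol of the alphabet. -/
def sym (a : α) : WithBot α := (a : WithBot α)

/-- The multi-string `m_P = t_1 $ t_2 $ ⋯ $ t_n $` over `WithBot α`. -/
def mP (P : OSS α) : List (WithBot α) :=
  (P.strs.map (fun s => s.map sym ++ [⊥])).flatten

/-- `SA` is a (0-based) suffix array for `m`: a bijection of `[0, |m|)` onto itself
listing the suffixes of `m` in increasing lexicographic order. -/
def IsSuffixArray [LinearOrder α] (m : List (WithBot α)) (SA : ℕ → ℕ) : Prop :=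
  Set.BijOn SA (Set.Iio m.length) (Set.Iio m.length) ∧
  ∀ i j : ℕ, i < j → j < m.length →
    List.Lex (· < ·) (m.drop (SA i)) (m.drop (SA j))

/-- `LRS(P)[i]` (0-based): number of symbols of `m` from position `SA i` up to (but not
including) the first separator at or after position `SA i`. -/
def lrs [LinearOrder α] (m : List (WithBot α)) (SA : ℕ → ℕ) (i : ℕ) : ℕ :=
  ((m.drop (SA i)).takeWhile (fun c => decide (c ≠ ⊥))).length

/-- Length of the longest common prefix of two lists. -/
def lcpLen [DecidableEq β] : List β → List β → ℕ
  | a :: s, b :: t => if a = b then lcpLen s t + 1 else 0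
  | _, _ => 0

/-- `LCP(P)[i] = min(LCP(m_P)[i], LRS(P)[i])` (0-based; `0` at `i = 0`). -/
def lcpP [LinearOrder α] (m : List (WithBot α)) (SA : ℕ → ℕ) (i : ℕ) : ℕ :=
  if i = 0 then 0
  else min (lcpLen (m.drop (SA (i - 1))) (m.drop (SA i))) (lrs m SA i)

/-- `Decomp_BWT(P)`: the maximal integer intervals `[u.1, u.2] ⊆ [0, |m|)` such that
`LCP(P)[k] = LRS(P)[k]` for every interior position `k ∈ [u.1+1, u.2]`. -/
def DecompBWT [LinearOrder α] (m : List (WithBot α)) (SA : ℕ → ℕ) : Set (ℕ × ℕ) :=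
  { u | u.1 ≤ u.2 ∧ u.2 < m.length ∧
        (∀ k, u.1 < k → k ≤ u.2 → lcpP m SA k = lrs m SA k) ∧
        (u.1 = 0 ∨ lcpP m SA u.1 ≠ lrs m SA u.1) ∧
        (u.2 + 1 = m.length ∨ lcpP m SA (u.2 + 1) ≠ lrs m SA (u.2 + 1)) }

/-- `Dec_Pre[u]`: the reverse of `m[SA u.1 .. SA u.1 + LRS[u.1] − 1]`. -/
def decPre [LinearOrder α] (m : List (WithBot α)) (SA : ℕ → ℕ) (u : ℕ × ℕ) :
    List (WithBot α) :=
  ((m.drop (SA u.1)).take (lrs m SA u.1)).reverse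

/-- `Prefix(←P.S)`: all prefixes (including the empty string) of the reversed strings of
`P.S`, viewed inside `WithBot α`. -/
def revPrefixes (P : OSS α) : Set (List (WithBot α)) :=
  { p | ∃ s ∈ P.strs, p <+: s.reverse.map sym }

/-- `Prefix(P.S)`: all prefixes (including the empty string) of the strings of `P.S`,
viewed inside `WithBot α`. -/
def fwdPrefixes (P : OSS α) : Set (List (WithBot α)) :=
  { p | ∃ s ∈ P.strs, p <+: s.map sym }

/-- `BWT(P)[i]` (0-based): `m[SA i − 1]` if `SA i > 0`, and the last symbol `$ = ⊥`
of `m` otherwise. -/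
def bwtArr (m : List (WithBot α)) (SA : ℕ → ℕ) (i : ℕ) : WithBot α :=
  if SA i = 0 then ⊥ else m.getD (SA i - 1) ⊥

/-- `C[c]`: the number of positions of `m` holding a symbol strictly smaller than `c`. -/
def Cfun [LinearOrder α] (m : List (WithBot α)) (c : WithBot α) : ℕ :=
  (m.filter (fun b => decide (b < c))).length

/-- The Last-to-First mapping (0-based):
`LF[i] = C[BWT[i]] + #{k < i : BWT[k] = BWT[i]}`. -/
def LF [LinearOrder α] (m : List (WithBot α)) (SA : ℕ → ℕ) (i : ℕ) : ℕ :=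
  Cfun m (bwtArr m SA i) +
    ((List.range i).filter (fun k => decide (bwtArr m SA k = bwtArr m SA i))).length

/-- The arc set `A_T(P)` on `Decomp_BWT(P)`. -/
def AT [LinearOrder α] (m : List (WithBot α)) (SA : ℕ → ℕ) :
    Set ((ℕ × ℕ) × (ℕ × ℕ)) :=
  { uv | uv.1 ∈ DecompBWT m SA ∧ uv.2 ∈ DecompBWT m SA ∧
      ∃ x, uv.1.1 ≤ x ∧ x ≤ uv.1.2 ∧ bwtArr m SA x ≠ ⊥ ∧
        uv.2.1 ≤ LF m SA x ∧ LF m SA x ≤ uv.2.2 }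

/-- Arc relation of the Aho–Corasick tree on the vertex set `Pref`:
`p` is the longest proper prefix of `q` belonging to `Pref`. -/
def ACTedge (Pref : Set (List β)) (p q : List β) : Prop :=
  p ∈ Pref ∧ q ∈ Pref ∧ p ≠ q ∧ p <+: q ∧
    ∀ r ∈ Pref, r ≠ q → r <+: q → r.length ≤ p.length

/-- `k` is a failure candidate for the position `i`: `k < i` and
`LRS[k] ≤ LCP[l]` for all `l ∈ [k+1, i]`. -/
def FailCand [LinearOrder α] (m : List (WithBot α)) (SA : ℕ → ℕ) (i k : ℕ) : Prop :=
  k < i ∧ ∀ l, k < l → l ≤ i → lrs m SA k ≤ lcpP m SA l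

/-- The arc set `A_F(P)` on `Decomp_BWT(P)`: the largest failure candidate for `u.1`
exists and lies in `v`. -/
def AF [LinearOrder α] (m : List (WithBot α)) (SA : ℕ → ℕ) :
    Set ((ℕ × ℕ) × (ℕ × ℕ)) :=
  { uv | uv.1 ∈ DecompBWT m SA ∧ uv.2 ∈ DecompBWT m SA ∧
      ∃ k, FailCand m SA uv.1.1 k ∧ (∀ k', FailCand m SA uv.1.1 k' → k' ≤ k) ∧
        uv.2.1 ≤ k ∧ k ≤ uv.2.2 }

/-- Arc relation of the Aho–Corasick failure-link graph on the vertex set `Pref`: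
`q` is the longest proper suffix of `p` belonging to `Pref`. -/
def ACFLedge (Pref : Set (List β)) (p q : List β) : Prop :=
  p ∈ Pref ∧ q ∈ Pref ∧ p ≠ q ∧ q <:+ p ∧
    ∀ r ∈ Pref, r ≠ p → r <:+ p → r.length ≤ q.length

/-- The Run-Length measure `d_B(P) = #{i : BWT[i] ≠ BWT[i+1]}` (0-based, `i` ranging
over the first `|m| − 1` positions). -/
def dB [LinearOrder α] (m : List (WithBot α)) (SA : ℕ → ℕ) : ℕ :=
  ((List.range (m.length - 1)).filter
      (fun i => decide (bwtArr m SA i ≠ bwtArr m SA (i + 1)))).length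

/-- `P` is topologically planar: for every prefix `p` of the reverse of some string of
`P.S`, the indices `r` with `p` a prefix of `reverse(t_r)` form a set of consecutive
integers. -/
def TopPlanar [DecidableEq α] (P : OSS α) : Prop :=
  ∀ p : List α, (∃ s ∈ P.strs, p <+: s.reverse) →
    ∀ r₁ r₂ r₃ : ℕ, r₁ ≤ r₂ → r₂ ≤ r₃ → r₃ < P.strs.length →
      p <+: (P.strs.getD r₁ []).reverse → p <+: (P.strs.getD r₃ []).reverse →
      p <+: (P.strs.getD r₂ []).reverse

/-- `Letter[i]`: the first symbol of the suffix of rank `i`, i.e. `m[SA i]`. -/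
def letterArr (m : List (WithBot α)) (SA : ℕ → ℕ) (i : ℕ) : WithBot α :=
  m.getD (SA i) ⊥

/-- 0-based select: the position of the `(j+1)`-st occurrence of `c` in
`f 0, f 1, …, f (N−1)`. -/
def select0 [LinearOrder α] (f : ℕ → WithBot α) (N : ℕ) (c : WithBot α) (j : ℕ) : ℕ :=
  (((List.range N).filter (fun k => decide (f k = c)))).getD j 0

/-- The inverse Last-to-First mapping (0-based):
`RLF[i] = select_{Letter[i]}(BWT, i − C[Letter[i]])`. -/
def RLF [LinearOrder α] (m : List (WithBot α)) (SA : ℕ → ℕ) (i : ℕ) : ℕ :=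
  select0 (bwtArr m SA) m.length (letterArr m SA i)
    (i - Cfun m (letterArr m SA i))

/-- `d_A(T') = #{i : T'[i] ≠ T'[i+1]}`, the number of adjacent mismatches. -/
def dA [DecidableEq β] : List β → ℕ
  | a :: b :: t => (if a = b then 0 else 1) + dA (b :: t)
  | _ => 0

/-- `T'` is valid for the block decomposition `B` (an interval partition given by the
lengths of the blocks): `T'` splits into blocks of the same lengths as those of `B`,
with the same symbol set blockwise. -/
def ValidArr [DecidableEq β] (B : List (List β)) (T' : List β) : Prop :=
  ∃ B' : List (List β),
    List.Forall₂ (fun b b' => b.length = b'.length ∧ b.toFinset = b'.toFinset) B B' ∧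
    B'.flatten = T'

/-- `T'` is optimal for the block decomposition `B`: valid and of minimal `d_A`. -/
def OptimalArr [DecidableEq β] (B : List (List β)) (T' : List β) : Prop :=
  ValidArr B T' ∧ ∀ T'' : List β, ValidArr B T'' → dA T' ≤ dA T''

/-!
Inside a block of `Decomp_BWT`, consecutive suffixes have the same first field (the part
before the first `$`): `LCP = LRS` says that the field of the later suffix is a prefix of the
earlier suffix, and since the earlier suffix is lexicographically smaller, the next symbol of
the earlier suffix must be `$`. So all suffixes of a block share one field, the reverse of
`Dec_Pre`.

`LF` sends the rank of the suffix at position `p` to the rank of the suffix at `p - 1`: the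
suffixes below `c :: S` are the `C[c]` ones starting with a symbol `< c`, and the ones
`c :: S'` with `S' < S`, which correspond to the earlier ranks carrying `c` in the BWT. Hence
the field at rank `LF x` is `BWT x` followed by the field at rank `x`.
-/

theorem append_lt_append_left_iff [LT β] [Std.Irrefl (· < · : β → β → Prop)]
    (w : List β) {s t : List β} : w ++ s < w ++ t ↔ s < t := by
  induction w with
  | nil => rfl
  | cons a w ih => simpa using ih

theorem take_eq_take_of_le_lcpLen [DecidableEq β] :
    ∀ {s t : List β} {n : ℕ}, n ≤ lcpLen s t → s.take n = t.take n
  | [], _, n, h | _ :: _, [], n, h => by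
    obtain rfl : n = 0 := by simpa [lcpLen] using h
    rfl
  | a :: s, b :: t, 0, _ => rfl
  | a :: s, b :: t, n + 1, h => by
    unfold lcpLen at h
    split_ifs at h with hab
    · rw [hab, List.take_succ_cons, List.take_succ_cons,
        take_eq_take_of_le_lcpLen (s := s) (t := t) (by omega)]
    · omega

theorem drop_eq_getD_cons (l : List β) (d : β) {q : ℕ} (hq : q < l.length) :
    l.drop q = l.getD q d :: l.drop (q + 1) := by
  rw [List.getD_eq_getElem _ _ hq]
  exact List.drop_eq_getElem_cons hq

open Finset in
theorem card_filter_range_succ_pred (n : ℕ) (p : ℕ → Prop) [DecidablePred p] :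
    #{i ∈ range (n + 1) | i ≠ 0 ∧ p (i - 1)} = #{i ∈ range n | p i} := by
  simp only [card_filter, sum_range_succ']
  simp

section Separator

variable [LinearOrder α]

theorem takeWhile_ne_bot_append_bot {w : List (WithBot α)} (hw : ∀ a ∈ w, a ≠ ⊥)
    (r : List (WithBot α)) : (w ++ ⊥ :: r).takeWhile (fun c => decide (c ≠ ⊥)) = w := by
  rw [List.takeWhile_append_of_pos (by simpa using hw)]
  simp

theorem ne_bot_of_mem_takeWhile {s : List (WithBot α)} {a : WithBot α}
    (ha : a ∈ s.takeWhile (fun c => decide (c ≠ ⊥))) : a ≠ ⊥ := by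
  simpa using List.mem_takeWhile_imp ha

theorem exists_eq_takeWhile_ne_bot_append {s : List (WithBot α)} (hs : ⊥ ∈ s) :
    ∃ r, s = s.takeWhile (fun c => decide (c ≠ ⊥)) ++ ⊥ :: r := by
  induction s with
  | nil => simp at hs
  | cons a s ih =>
    by_cases ha : a = ⊥
    · exact ⟨s, by simp [ha]⟩
    · obtain ⟨r, hr⟩ := ih (by simpa [Ne.symm ha] using hs)
      exact ⟨r, by rw [List.takeWhile_cons_of_pos (by simpa using ha), List.cons_append, ← hr]⟩

theorem takeWhile_ne_bot_eq_of_lt {s t : List (WithBot α)} (hst : s < t) (hs : ⊥ ∈ s)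
    (ht : ⊥ ∈ t) (hpre : t.takeWhile (fun c => decide (c ≠ ⊥)) <+: s) :
    s.takeWhile (fun c => decide (c ≠ ⊥)) = t.takeWhile (fun c => decide (c ≠ ⊥)) := by
  set w := t.takeWhile (fun c => decide (c ≠ ⊥))
  have hw : ∀ a ∈ w, a ≠ ⊥ := fun a ha => ne_bot_of_mem_takeWhile ha
  obtain ⟨r, hr⟩ := exists_eq_takeWhile_ne_bot_append ht
  obtain ⟨s', rfl⟩ := hpre
  rw [hr, append_lt_append_left_iff] at hst
  match s', hst with
  | [], _ => exact absurd hs (by simpa using hw ⊥)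
  | a :: s'', hst =>
    obtain ⟨rfl, -⟩ : a = ⊥ ∧ s'' < r := by simpa [List.cons_lt_cons_iff] using hst
    exact takeWhile_ne_bot_append_bot hw s''

end Separator

theorem bot_mem_drop_of_suffix {m : List (WithBot α)} (hm : [⊥] <:+ m)
    {q : ℕ} (hq : q < m.length) : ⊥ ∈ m.drop q := by
  obtain ⟨m', rfl⟩ := hm
  rw [List.length_append, List.length_singleton] at hq
  rw [List.drop_append_of_le_length (by omega)]
  simp

theorem getD_length_sub_one_of_suffix {m : List (WithBot α)} (hm : [⊥] <:+ m) :
    m.getD (m.length - 1) ⊥ = ⊥ := by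
  obtain ⟨m', rfl⟩ := hm
  simp

theorem suffix_mP (P : OSS α) : [⊥] <:+ mP P := by
  obtain ⟨l, t, h⟩ := (List.eq_nil_or_concat P.strs).resolve_left P.strs_ne
  exact ⟨(l.map (fun s => s.map sym ++ [⊥])).flatten ++ t.map sym, by simp [mP, h]⟩

theorem decPre_eq [LinearOrder α] (m : List (WithBot α)) (SA : ℕ → ℕ) (u : ℕ × ℕ) :
    decPre m SA u = ((m.drop (SA u.1)).takeWhile (fun c => decide (c ≠ ⊥))).reverse := by
  rw [decPre, lrs, ← List.prefix_iff_eq_take.mp (List.takeWhile_prefix _)]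

namespace IsSuffixArray

variable [LinearOrder α] {m : List (WithBot α)} {SA : ℕ → ℕ}

theorem lt_length (hSA : IsSuffixArray m SA) {i : ℕ} (hi : i < m.length) : SA i < m.length :=
  hSA.1.mapsTo hi

theorem lt_iff (hSA : IsSuffixArray m SA) {i j : ℕ} (hi : i < m.length) (hj : j < m.length) :
    i < j ↔ m.drop (SA i) < m.drop (SA j) := by
  refine ⟨fun h => hSA.2 i j h hj, fun h => ?_⟩
  rcases lt_trichotomy i j with hij | rfl | hji
  · exact hij
  · exact absurd h (List.lt_irrefl _)
  · exact absurd (hSA.2 j i hji hi) (List.lt_asymm h)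

theorem takeWhile_succ_eq (hSA : IsSuffixArray m SA) (hm : [⊥] <:+ m) {k : ℕ}
    (hk : k + 1 < m.length) (hlcp : lcpP m SA (k + 1) = lrs m SA (k + 1)) :
    (m.drop (SA (k + 1))).takeWhile (fun c => decide (c ≠ ⊥)) =
      (m.drop (SA k)).takeWhile (fun c => decide (c ≠ ⊥)) := by
  set s := m.drop (SA k)
  set t := m.drop (SA (k + 1))
  have hlen : (t.takeWhile (fun c => decide (c ≠ ⊥))).length ≤ lcpLen s t := by
    rw [lcpP, if_neg k.succ_ne_zero, Nat.add_sub_cancel] at hlcp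
    exact min_eq_right_iff.mp hlcp
  have hpre : t.takeWhile (fun c => decide (c ≠ ⊥)) <+: s := by
    rw [List.prefix_iff_eq_take.mp (List.takeWhile_prefix _), ← take_eq_take_of_le_lcpLen hlen]
    exact List.take_prefix _ _
  refine (takeWhile_ne_bot_eq_of_lt (hSA.2 k (k + 1) k.lt_succ_self hk) ?_ ?_ hpre).symm
  · exact bot_mem_drop_of_suffix hm (hSA.lt_length (by omega))
  · exact bot_mem_drop_of_suffix hm (hSA.lt_length hk)

theorem takeWhile_eq_of_mem_block (hSA : IsSuffixArray m SA) (hm : [⊥] <:+ m) {a b : ℕ}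
    (hb : b < m.length) (hblock : ∀ k, a < k → k ≤ b → lcpP m SA k = lrs m SA k)
    {k : ℕ} (hak : a ≤ k) (hkb : k ≤ b) :
    (m.drop (SA k)).takeWhile (fun c => decide (c ≠ ⊥)) =
      (m.drop (SA a)).takeWhile (fun c => decide (c ≠ ⊥)) := by
  induction k, hak using Nat.le_induction with
  | base => rfl
  | succ k hak ih =>
    rw [hSA.takeWhile_succ_eq hm (by omega) (hblock (k + 1) (by omega) hkb), ih (by omega)]

end IsSuffixArray

theorem drop_sub_one_eq_bwtArr_cons {m : List (WithBot α)} {SA : ℕ → ℕ} {x : ℕ}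
    (hb : bwtArr m SA x ≠ ⊥) : m.drop (SA x - 1) = bwtArr m SA x :: m.drop (SA x) := by
  have h0 : SA x ≠ 0 := fun h => hb (by simp [bwtArr, h])
  have hc : bwtArr m SA x = m.getD (SA x - 1) ⊥ := if_neg h0
  have hlt : SA x - 1 < m.length := by
    by_contra h
    exact hb (hc ▸ List.getD_eq_default _ _ (not_lt.mp h))
  rw [hc, drop_eq_getD_cons m ⊥ hlt, Nat.sub_add_cancel (Nat.pos_of_ne_zero h0)]

section LastToFirst

open Finset

variable [LinearOrder α]

theorem card_filter_getD_lt (m : List (WithBot α)) (c : WithBot α) :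
    #{q ∈ range m.length | m.getD q ⊥ < c} = Cfun m c := by
  have hm : (List.range m.length).map (m.getD · ⊥) = m :=
    List.ext_getElem (by simp) fun i _ h => by simp [List.getElem?_eq_getElem h]
  calc #{q ∈ range m.length | m.getD q ⊥ < c}
      = ((List.range m.length).filter (fun q => decide (m.getD q ⊥ < c))).length := rfl
    _ = (((List.range m.length).map (m.getD · ⊥)).filter (fun b => decide (b < c))).length := by
      rw [List.filter_map, List.length_map]
      rfl
    _ = Cfun m c := by rw [hm, Cfun]

theorem card_filter_drop_lt_cons (m : List (WithBot α)) (c : WithBot α) (L : List (WithBot α)) :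
    #{q ∈ range m.length | m.drop q < c :: L} =
      Cfun m c + #{q ∈ range m.length | m.getD q ⊥ = c ∧ m.drop (q + 1) < L} := by
  rw [← card_filter_getD_lt, ← card_union_of_disjoint, ← filter_or]
  · refine congrArg card (filter_congr fun q hq => ?_)
    rw [drop_eq_getD_cons m ⊥ (mem_range.mp hq), List.cons_lt_cons_iff]
  · exact disjoint_filter.mpr fun _ _ hlt heq => hlt.ne heq.1

namespace IsSuffixArray

variable {m : List (WithBot α)} {SA : ℕ → ℕ}

theorem card_filter_comp (hSA : IsSuffixArray m SA) (p : ℕ → Prop) [DecidablePred p] :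
    #{i ∈ range m.length | p (SA i)} = #{q ∈ range m.length | p q} := by
  have hmaps : ∀ i ∈ {i ∈ range m.length | p (SA i)}, SA i ∈ {q ∈ range m.length | p q} := by
    intro i hi
    simp only [mem_filter, mem_range] at hi ⊢
    exact ⟨hSA.lt_length hi.1, hi.2⟩
  have hinj : Set.InjOn SA ({i ∈ range m.length | p (SA i)} : Finset ℕ) :=
    hSA.1.injOn.mono fun i hi => mem_range.mp (mem_filter.mp hi).1
  have hsurj : Set.SurjOn SA ({i ∈ range m.length | p (SA i)} : Finset ℕ)
      ({q ∈ range m.length | p q} : Finset ℕ) := by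
    intro q hq
    simp only [coe_filter, mem_range] at hq
    obtain ⟨i, hi, rfl⟩ := hSA.1.surjOn hq.1
    exact ⟨i, by simpa using ⟨hi, hq.2⟩, rfl⟩
  exact card_nbij SA hmaps hinj hsurj

theorem filter_drop_lt_drop_eq_range (hSA : IsSuffixArray m SA) {j : ℕ} (hj : j < m.length) :
    {i ∈ range m.length | m.drop (SA i) < m.drop (SA j)} = range j := by
  ext i
  simp only [mem_filter, mem_range]
  exact ⟨fun h => (hSA.lt_iff h.1 hj).mpr h.2,
    fun h => ⟨h.trans hj, (hSA.lt_iff (h.trans hj) hj).mp h⟩⟩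

theorem card_filter_drop_lt_drop (hSA : IsSuffixArray m SA) {j : ℕ} (hj : j < m.length) :
    #{q ∈ range m.length | m.drop q < m.drop (SA j)} = j := by
  rw [← hSA.card_filter_comp (fun q => m.drop q < m.drop (SA j)),
    hSA.filter_drop_lt_drop_eq_range hj, card_range]

theorem card_filter_bwtArr_eq (hSA : IsSuffixArray m SA) (hm : [⊥] <:+ m) {x : ℕ}
    (hx : x < m.length) {c : WithBot α} (hc : c ≠ ⊥) :
    #{k ∈ range x | bwtArr m SA k = c} =
      #{q ∈ range m.length | m.getD q ⊥ = c ∧ m.drop (q + 1) < m.drop (SA x)} := by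
  set L := m.drop (SA x)
  have hbwt : ∀ k, bwtArr m SA k = c ↔ SA k ≠ 0 ∧ m.getD (SA k - 1) ⊥ = c := fun k => by
    unfold bwtArr
    split_ifs with h
    · simp [h, hc.symm]
    · simp [h]
  obtain ⟨n, hn⟩ : ∃ n, m.length = n + 1 := ⟨m.length - 1, by omega⟩
  have hlast : m.getD n ⊥ ≠ c := by
    rw [show n = m.length - 1 by omega, getD_length_sub_one_of_suffix hm]
    exact hc.symm
  calc #{k ∈ range x | bwtArr m SA k = c}
      = #{k ∈ range m.length | SA k ≠ 0 ∧ m.getD (SA k - 1) ⊥ = c ∧ m.drop (SA k) < L} := by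
        rw [← hSA.filter_drop_lt_drop_eq_range hx, filter_filter]
        refine congrArg card (filter_congr fun k _ => ?_)
        rw [hbwt]
        tauto
    _ = #{q ∈ range m.length | q ≠ 0 ∧ m.getD (q - 1) ⊥ = c ∧ m.drop q < L} :=
        hSA.card_filter_comp (fun q => q ≠ 0 ∧ m.getD (q - 1) ⊥ = c ∧ m.drop q < L)
    _ = #{q ∈ range n | m.getD q ⊥ = c ∧ m.drop (q + 1) < L} := by
        rw [hn, ← card_filter_range_succ_pred n]
        refine congrArg card (filter_congr fun q _ => ?_)
        constructor
        · rintro ⟨hq, h⟩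
          exact ⟨hq, by rwa [Nat.sub_add_cancel (Nat.pos_of_ne_zero hq)]⟩
        · rintro ⟨hq, h⟩
          exact ⟨hq, by rwa [Nat.sub_add_cancel (Nat.pos_of_ne_zero hq)] at h⟩
    _ = #{q ∈ range m.length | m.getD q ⊥ = c ∧ m.drop (q + 1) < L} := by
        rw [hn, range_add_one, filter_insert, if_neg fun h => hlast h.1]

theorem drop_LF (hSA : IsSuffixArray m SA) (hm : [⊥] <:+ m) {x : ℕ} (hx : x < m.length)
    (hb : bwtArr m SA x ≠ ⊥) :
    m.drop (SA (LF m SA x)) = bwtArr m SA x :: m.drop (SA x) := by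
  have hstep := drop_sub_one_eq_bwtArr_cons hb
  have hlt : SA x - 1 < m.length := by
    have := hSA.lt_length hx
    omega
  obtain ⟨j, hj, hSAj⟩ := hSA.1.surjOn hlt
  suffices LF m SA x = j by rw [this, hSAj, hstep]
  calc LF m SA x = Cfun m (bwtArr m SA x) + #{k ∈ range x | bwtArr m SA k = bwtArr m SA x} := rfl
    _ = #{q ∈ range m.length | m.drop q < bwtArr m SA x :: m.drop (SA x)} := by
      rw [card_filter_drop_lt_cons, hSA.card_filter_bwtArr_eq hm hx hb]
    _ = j := by rw [← hstep, ← hSAj, hSA.card_filter_drop_lt_drop hj]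

end IsSuffixArray

end LastToFirst

theorem decPre_extend_general [LinearOrder α] (P : OSS α) (SA : ℕ → ℕ)
    (hSA : IsSuffixArray (mP P) SA)
    (u v : ℕ × ℕ) (hu : u ∈ DecompBWT (mP P) SA) (hv : v ∈ DecompBWT (mP P) SA)
    (x : ℕ) (hx₁ : u.1 ≤ x) (hx₂ : x ≤ u.2) (hb : bwtArr (mP P) SA x ≠ ⊥)
    (hl₁ : v.1 ≤ LF (mP P) SA x) (hl₂ : LF (mP P) SA x ≤ v.2) :
    decPre (mP P) SA v = decPre (mP P) SA u ++ [bwtArr (mP P) SA x] := by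
  have hm := suffix_mP P
  have hbu := hSA.takeWhile_eq_of_mem_block hm hu.2.1 hu.2.2.1 hx₁ hx₂
  have hbv := hSA.takeWhile_eq_of_mem_block hm hv.2.1 hv.2.2.1 hl₁ hl₂
  rw [decPre_eq, decPre_eq, ← hbu, ← hbv, hSA.drop_LF hm (by have := hu.2.1; omega) hb,
    List.takeWhile_cons_of_pos (by simpa using hb), List.reverse_cons]

/-- If `x ∈ u` satisfies `BWT(P)[x] ≠ $` and `LF(P)[x] ∈ v`, then
`Dec_Pre[v] = Dec_Pre[u] ++ [BWT(P)[x]]`. -/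
theorem decPre_extend [Fintype α] [LinearOrder α] (P : OSS α) (SA : ℕ → ℕ)
    (hSA : IsSuffixArray (mP P) SA)
    (u v : ℕ × ℕ) (hu : u ∈ DecompBWT (mP P) SA) (hv : v ∈ DecompBWT (mP P) SA)
    (x : ℕ) (hx₁ : u.1 ≤ x) (hx₂ : x ≤ u.2) (hb : bwtArr (mP P) SA x ≠ ⊥)
    (hl₁ : v.1 ≤ LF (mP P) SA x) (hl₂ : LF (mP P) SA x ≤ v.2) :
    decPre (mP P) SA v = decPre (mP P) SA u ++ [bwtArr (mP P) SA x] :=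
  decPre_extend_general P SA hSA u v hu hv x hx₁ hx₂ hb hl₁ hl₂

end BwtXbw
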